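/- arXiv:1209.3663 — 2 statements merged into one kernel-verified Lean document; each statement's English description precedes it below -/
import Mathlib

section
/- Let K be a complete non-archimedean valued field, L a complete valued field extension of K, and suppose x is a multiplicative seminorm on a K-Banach algebra A such that for every complete extension L/K the tensor norm on H(x) \hat\otimes_K L is multiplicative (x is universal). Then for every continuous K-automorphism \sigma of L, the point x_L of the base change induced by the tensor seminorm satisfies \sigma(x_L) = x_L, where \sigma acts on H(x) \hat\otimes_K L via the second factor. -/
open scoped TensorProduct

/-- A universal point is Galois-invariant: if `x` is a multiplicative (power-multiplicative,
ultrametric) seminorm on a `K`-algebra `A` whose tensor seminorm `xL` on `A ⊗_K L` (defined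
by the infimum over representations of the sup of products of norms) is multiplicative,
then for any isometric continuous `K`-automorphism `σ` of `L`, the induced point is fixed:
`xL ∘ (id ⊗ σ) = xL`. -/
theorem stmt5 {K L : Type*} [NormedField K] [CompleteSpace K]
    [NormedField L] [CompleteSpace L] [NormedAlgebra K L]
    {A : Type*} [CommRing A] [Algebra K A]
    (x : A → ℝ) (hx0 : ∀ a, 0 ≤ x a) (hxmul : ∀ a b, x (a * b) = x a * x b)
    (hxadd : ∀ a b, x (a + b) ≤ max (x a) (x b))
    (xL : A ⊗[K] L → ℝ)
    (hxL : ∀ z : A ⊗[K] L, xL z = sInf {r : ℝ | ∃ (n : ℕ) (a : Fin n → A) (l : Fin n → L),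
      z = ∑ i, a i ⊗ₜ[K] l i ∧ r = ⨆ i, x (a i) * ‖l i‖})
    (huniv : ∀ z w : A ⊗[K] L, xL (z * w) = xL z * xL w)
    (σ : L ≃ₐ[K] L) (hσ : ∀ l : L, ‖σ l‖ = ‖l‖) :
    ∀ z : A ⊗[K] L, xL (TensorProduct.map LinearMap.id σ.toLinearMap z) = xL z := by
  intro z
  rw [hxL, hxL]
  congr 1
  ext r
  constructor
  · rintro ⟨n, a, l, hrep, hr⟩
    refine ⟨n, a, fun i => σ.symm (l i), ?_, ?_⟩
    · apply_fun TensorProduct.map LinearMap.id σ.toLinearMap using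
        (TensorProduct.congr (LinearEquiv.refl K A) σ.toLinearEquiv).injective
      rw [hrep, map_sum]
      simp [TensorProduct.map_tmul]
    · rw [hr]
      congr 1; ext i
      rw [← hσ (σ.symm (l i))]
      simp
  · rintro ⟨n, a, l, hrep, hr⟩
    refine ⟨n, a, fun i => σ (l i), ?_, ?_⟩
    · rw [hrep, map_sum]
      simp [TensorProduct.map_tmul]
    · rw [hr]
      congr 1; ext i
      rw [hσ]
end

section
/- Let K be a complete non-archimedean valued field, and let A be the ring of Laurent series converging on the open annulus {R_1 < |x| < R_2}. For f \in A nonzero, the function s \mapsto \log\|f\|_{e^s} on (\log R_1, \log R_2) (where \|f\|_R = \sup_i |a_i|R^i) is convex, and its one-sided slopes at every point are integers bounded in absolute value whenever f has finitely many dominant monomials on a compact subinterval. -/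
lemma exp_zpow' (x : ℝ) (n : ℤ) : Real.exp x ^ n = Real.exp (n * x) := by
  rw [← Real.exp_log (x := Real.exp x ^ n) (zpow_pos (Real.exp_pos x) n), Real.log_zpow,
    Real.log_exp]

lemma sup_attained' (f : ℤ → ℝ) (hfin : ∀ ε > 0, {i | ε ≤ f i}.Finite)
    (hpos : ∃ i, 0 < f i) : ∃ i₀, 0 < f i₀ ∧ ∀ i, f i ≤ f i₀ := by
  obtain ⟨j, hj⟩ := hpos
  have hS : {i | f j ≤ f i}.Finite := hfin (f j) hj
  have hjS : j ∈ hS.toFinset := by simp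
  obtain ⟨i₀, hi₀S, hmax⟩ := hS.toFinset.exists_max_image f ⟨j, hjS⟩
  refine ⟨i₀, lt_of_lt_of_le hj (hmax j hjS), fun i => ?_⟩
  by_cases hi : f j ≤ f i
  · exact hmax i (by simpa using hi)
  · exact (not_le.mp hi).le.trans (hmax j hjS)

/-- strict gap below the max for non-dominant indices -/
lemma gap_lemma (f : ℤ → ℝ) (hfin : ∀ ε > 0, {i | ε ≤ f i}.Finite)
    (i₀ : ℤ) (h0 : 0 < f i₀) (hmax : ∀ i, f i ≤ f i₀) :
    ∃ β, 0 < β ∧ β < f i₀ ∧ ∀ i, f i ≠ f i₀ → f i ≤ β := by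
  have hS : {i | f i₀ / 2 ≤ f i}.Finite := hfin _ (by linarith)
  set T : Finset ℤ := hS.toFinset.filter (fun i => f i ≠ f i₀) with hT
  rcases T.eq_empty_or_nonempty with hTe | hTn
  · refine ⟨f i₀ / 2, by linarith, by linarith, fun i hi => ?_⟩
    by_contra hc
    have : i ∈ T := by
      simp only [hT, Finset.mem_filter, Set.Finite.mem_toFinset, Set.mem_setOf_eq]
      exact ⟨(not_le.mp hc).le, hi⟩
    simp [hTe] at this
  · refine ⟨max (f i₀ / 2) (T.sup' hTn f), lt_max_of_lt_left (by linarith), ?_, fun i hi => ?_⟩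
    · apply max_lt (by linarith)
      apply Finset.sup'_lt_iff hTn |>.mpr
      intro i hiT
      have := (Finset.mem_filter.mp hiT).2
      exact lt_of_le_of_ne (hmax i) this
    · by_cases hc : f i₀ / 2 ≤ f i
      · exact le_max_of_le_right (Finset.le_sup' f (by
          simp only [hT, Finset.mem_filter, Set.Finite.mem_toFinset, Set.mem_setOf_eq]
          exact ⟨hc, hi⟩))
      · exact le_max_of_le_left (not_le.mp hc).le

set_option maxHeartbeats 1000000 in
lemma key_right (c : ℤ → ℝ) (hc : ∀ i, 0 ≤ c i) (s Δ : ℝ) (hΔ : 0 < Δ)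
    (hfin : ∀ ε > 0, {i : ℤ | ε ≤ c i * Real.exp s ^ i}.Finite)
    (hpos : ∃ i, 0 < c i)
    (B : ℝ) (hB : ∀ i, c i * Real.exp (s + Δ) ^ i ≤ B) :
    ∃ m : ℤ, ∃ δ > 0, ∀ t ∈ Set.Icc s (s + δ),
      Real.log (⨆ i, c i * Real.exp t ^ i)
        = Real.log (⨆ i, c i * Real.exp s ^ i) + m * (t - s) := by
  set f : ℤ → ℝ := fun i => c i * Real.exp s ^ i with hf
  have hfpos : ∃ i, 0 < f i := by
    obtain ⟨i, hi⟩ := hpos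
    exact ⟨i, mul_pos hi (zpow_pos (Real.exp_pos s) i)⟩
  obtain ⟨i₀, hC, hmax⟩ := sup_attained' f hfin hfpos
  set C : ℝ := f i₀ with hCdef
  -- the dominant set
  have hDfin : {i | f i = C}.Finite := by
    apply (hfin C hC).subset
    intro i hi
    simp only [Set.mem_setOf_eq] at hi ⊢
    exact hi.ge
  have hi₀D : i₀ ∈ hDfin.toFinset := by simp [hCdef]
  set m : ℤ := hDfin.toFinset.max' ⟨i₀, hi₀D⟩ with hm
  have hmD : f m = C := by
    have := hDfin.toFinset.max'_mem ⟨i₀, hi₀D⟩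
    simpa using this
  have hle_m : ∀ i, f i = C → i ≤ m := fun i hi =>
    hDfin.toFinset.le_max' i (by simpa using hi)
  obtain ⟨β, hβ0, hβC, hβ⟩ := gap_lemma f hfin i₀ hC hmax
  set γ : ℝ := Real.log C - Real.log β with hγdef
  have hγ : 0 < γ := by
    have := Real.log_lt_log hβ0 hβC
    simp only [hγdef]; linarith
  set B' : ℝ := max B C with hB'def
  have hB'C : C ≤ B' := le_max_right _ _
  have hB'0 : 0 < B' := lt_of_lt_of_le hC hB'C
  set K : ℝ := max (Real.log B' - Real.log C) 0 with hKdef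
  have hK0 : 0 ≤ K := le_max_right _ _
  set δ : ℝ := min (Δ/2) (min (γ*Δ/(4*(K+1))) (γ/(4*(|(m:ℝ)| + 1)))) with hδdef
  have habs : (0:ℝ) ≤ |(m:ℝ)| := abs_nonneg _
  have hδ0 : 0 < δ := by
    apply lt_min (by linarith)
    apply lt_min
    · positivity
    · positivity
  refine ⟨m, δ, hδ0, fun t ht => ?_⟩
  obtain ⟨hts, htδ⟩ := ht
  set h : ℝ := t - s with hhdef
  clear_value h
  have hh0 : 0 ≤ h := by simp [hhdef]; linarith
  have hhδ : h ≤ δ := by simp [hhdef]; linarith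
  have hhΔ2 : h ≤ Δ/2 := le_trans hhδ (min_le_left _ _)
  have hh1 : h ≤ γ*Δ/(4*(K+1)) := le_trans hhδ (le_trans (min_le_right _ _) (min_le_left _ _))
  have hh2 : h ≤ γ/(4*(|(m:ℝ)| + 1)) := le_trans hhδ (le_trans (min_le_right _ _) (min_le_right _ _))
  -- decomposition of exp t ^ i
  have hdecomp : ∀ i : ℤ, c i * Real.exp t ^ i = f i * Real.exp (i * h) := by
    intro i
    have : Real.exp t = Real.exp s * Real.exp h := by
      rw [← Real.exp_add]; congr 1; simp [hhdef]
    rw [this, mul_zpow, exp_zpow' h i, hf]; ring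
  -- the main upper bound
  have hub : ∀ i : ℤ, c i * Real.exp t ^ i ≤ C * Real.exp (m * h) := by
    intro i
    by_cases hiD : f i = C
    · rw [hdecomp i, hiD]
      have : (i:ℝ) * h ≤ (m:ℝ) * h := by
        apply mul_le_mul_of_nonneg_right _ hh0
        exact_mod_cast hle_m i hiD
      exact mul_le_mul_of_nonneg_left (Real.exp_le_exp.mpr this) hC.le
    · by_cases hci : c i = 0
      · rw [hci, zero_mul]
        positivity
      · have hci0 : 0 < c i := lt_of_le_of_ne (hc i) (Ne.symm hci)
        have hfi0 : 0 < f i := mul_pos hci0 (zpow_pos (Real.exp_pos s) i)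
        have hfiβ : f i ≤ β := hβ i hiD
        -- log estimates
        have hA1 : Real.log (c i) + i * s ≤ Real.log β := by
          have : Real.log (f i) ≤ Real.log β := Real.log_le_log hfi0 hfiβ
          rwa [hf, Real.log_mul hci (by positivity), Real.log_zpow, Real.log_exp] at this
        have hA2 : Real.log (c i) + i * (s + Δ) ≤ Real.log B' := by
          have h1 : c i * Real.exp (s + Δ) ^ i ≤ B' := le_trans (hB i) (le_max_left _ _)
          have h2 : 0 < c i * Real.exp (s + Δ) ^ i := by positivity
          have := Real.log_le_log h2 h1
          rwa [Real.log_mul hci (by positivity), Real.log_zpow, Real.log_exp] at this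
        have hlam : i * t = ((Δ - h)/Δ) * (i * s) + (h/Δ) * (i * (s + Δ)) := by
          rw [hhdef]
          field_simp
          ring
        have hbound : Real.log (c i) + i * t ≤ Real.log C + m * h := by
          have hlam1 : (1:ℝ)/2 ≤ (Δ - h)/Δ := by
            rw [le_div_iff₀ hΔ]; linarith
          have hlam2 : (Δ - h)/Δ ≤ 1 := by
            rw [div_le_one hΔ]; linarith
          have e0 : Real.log (c i) + i * t
              ≤ ((Δ - h)/Δ) * Real.log β + (h/Δ) * Real.log B' := by
            have : Real.log (c i) + i * t
                = ((Δ - h)/Δ) * (Real.log (c i) + i * s)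
                  + (h/Δ) * (Real.log (c i) + i * (s + Δ)) := by
              rw [hlam]; field_simp; ring
            rw [this]
            have t1 : ((Δ - h)/Δ) * (Real.log (c i) + i * s) ≤ ((Δ - h)/Δ) * Real.log β :=
              mul_le_mul_of_nonneg_left hA1 (by linarith)
            have t2 : (h/Δ) * (Real.log (c i) + i * (s + Δ)) ≤ (h/Δ) * Real.log B' :=
              mul_le_mul_of_nonneg_left hA2 (div_nonneg hh0 hΔ.le)
            linarith
          have e1 : ((Δ - h)/Δ) * Real.log β + (h/Δ) * Real.log B'
              ≤ Real.log C - γ/2 + (h/Δ) * K := by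
            have hlogβ : Real.log β = Real.log C - γ := by simp [hγdef]
            have hK1 : Real.log B' ≤ Real.log C + K := by
              have : Real.log B' - Real.log C ≤ K := le_max_left _ _
              linarith
            have t1 : ((Δ - h)/Δ) * Real.log β ≤ ((Δ - h)/Δ) * Real.log C - γ/2 := by
              rw [hlogβ, mul_sub]
              have : γ/2 ≤ ((Δ - h)/Δ) * γ := by
                calc γ/2 = (1/2) * γ := by ring
                _ ≤ ((Δ - h)/Δ) * γ := mul_le_mul_of_nonneg_right hlam1 hγ.le
              linarith
            have t2 : (h/Δ) * Real.log B' ≤ (h/Δ) * Real.log C + (h/Δ) * K := by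
              have h5 : (0:ℝ) ≤ h/Δ := div_nonneg hh0 hΔ.le
              nlinarith [mul_le_mul_of_nonneg_left hK1 h5]
            have t3 : ((Δ - h)/Δ) * Real.log C + (h/Δ) * Real.log C = Real.log C := by
              field_simp
              ring
            linarith [t1, t2, t3]
          have e2 : (h/Δ) * K ≤ γ/4 := by
            have hp1 : (0:ℝ) < 4*(K+1) := by linarith
            have h4 := (le_div_iff₀ hp1).mp hh1
            have h5 : h * K ≤ γ/4 * Δ := by nlinarith [mul_nonneg hh0 hK0]
            calc (h/Δ) * K = h*K/Δ := by ring
              _ ≤ γ/4 := by rw [div_le_iff₀ hΔ]; linarith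
          have e3 : -(γ/4) ≤ (m:ℝ) * h := by
            have hp1 : (0:ℝ) < 4*(|(m:ℝ)|+1) := by linarith
            have h4 := (le_div_iff₀ hp1).mp hh2
            have habs2 : |(m:ℝ)| * h ≤ γ/4 := by nlinarith [mul_nonneg hh0 habs]
            have hneg := neg_abs_le ((m:ℝ) * h)
            rw [abs_mul, abs_of_nonneg hh0] at hneg
            linarith
          linarith
        -- exponentiate
        have hlhs : 0 < c i * Real.exp t ^ i := by positivity
        calc c i * Real.exp t ^ i = Real.exp (Real.log (c i * Real.exp t ^ i)) :=
              (Real.exp_log hlhs).symm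
          _ = Real.exp (Real.log (c i) + i * t) := by
              rw [Real.log_mul hci (by positivity), Real.log_zpow, Real.log_exp]
          _ ≤ Real.exp (Real.log C + m * h) := Real.exp_le_exp.mpr hbound
          _ = C * Real.exp (m * h) := by
              rw [Real.exp_add, Real.exp_log hC]
  -- value attained at m
  have hatt : c m * Real.exp t ^ m = C * Real.exp (m * h) := by
    rw [hdecomp m, hmD]
  have hbdd : BddAbove (Set.range fun i => c i * Real.exp t ^ i) :=
    ⟨C * Real.exp (m * h), by rintro x ⟨i, rfl⟩; exact hub i⟩
  have hsupt : (⨆ i, c i * Real.exp t ^ i) = C * Real.exp (m * h) := by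
    apply le_antisymm (ciSup_le hub)
    rw [← hatt]
    exact le_ciSup hbdd m
  have hsups : (⨆ i, c i * Real.exp s ^ i) = C := by
    apply le_antisymm (ciSup_le hmax)
    exact le_ciSup ⟨C, by rintro x ⟨i, rfl⟩; exact hmax i⟩ i₀
  rw [hsupt, hsups, Real.log_mul hC.ne' (Real.exp_pos _).ne', Real.log_exp, hhdef]

lemma iSup_neg_reindex (g : ℤ → ℝ) : (⨆ i : ℤ, g (-i)) = ⨆ i, g i := by
  have hr : Set.range (fun i : ℤ => g (-i)) = Set.range g := by
    have h1 : (fun i : ℤ => g (-i)) = g ∘ (fun i : ℤ => -i) := rfl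
    rw [h1, Function.Surjective.range_comp neg_surjective]
  rw [iSup, iSup, hr]

lemma finite_superlevel {K : Type*} [NormedField K] (a : ℤ → K) (R : ℝ) (hR : 0 < R)
    (h : Filter.Tendsto (fun n : ℕ => ‖a (n : ℤ)‖ * R ^ (n : ℤ)
        + ‖a (-(n : ℤ))‖ * R ^ (-(n : ℤ))) Filter.atTop (nhds 0)) :
    ∀ ε > 0, {i : ℤ | ε ≤ ‖a i‖ * R ^ i}.Finite := by
  intro ε hε
  obtain ⟨N, hN⟩ := (h.eventually (gt_mem_nhds hε)).exists_forall_of_atTop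
  apply (Set.finite_Icc (-(N:ℤ)) N).subset
  intro i hi
  simp only [Set.mem_setOf_eq] at hi
  simp only [Set.mem_Icc]
  constructor
  · by_contra hcon
    push_neg at hcon
    set n : ℕ := (-i).toNat with hn
    have hin : -(n:ℤ) = i := by
      rw [hn]; omega
    have hnN : N ≤ n := by omega
    have := hN n hnN
    rw [hin] at this
    have h2 : (0:ℝ) ≤ ‖a (n:ℤ)‖ * R ^ (n:ℤ) := by positivity
    linarith
  · by_contra hcon
    push_neg at hcon
    set n : ℕ := i.toNat with hn
    have hin : (n:ℤ) = i := by rw [hn]; omega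
    have hnN : N ≤ n := by omega
    have := hN n hnN
    rw [hin] at this
    have h2 : (0:ℝ) ≤ ‖a (-(n:ℤ))‖ * R ^ (-(n:ℤ)) := by positivity
    rw [hin] at h2
    linarith

/-- For a nonzero Laurent series converging on the open annulus `R₁ < |x| < R₂`, the
function `s ↦ log ‖f‖_{e^s}` is convex on `(log R₁, log R₂)`, and at every point where
the set of dominant monomials is finite, its one-sided derivatives exist and are
integers. -/
theorem stmt14 {K : Type*} [NormedField K] [CompleteSpace K]
    (R₁ R₂ : ℝ) (h1 : 0 < R₁) (h12 : R₁ < R₂) (a : ℤ → K) (hne : ∃ i, a i ≠ 0)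
    (hconv : ∀ R ∈ Set.Ioo R₁ R₂,
      Filter.Tendsto (fun n : ℕ => ‖a (n : ℤ)‖ * R ^ (n : ℤ)
        + ‖a (-(n : ℤ))‖ * R ^ (-(n : ℤ))) Filter.atTop (nhds 0))
    (F : ℝ → ℝ) (hF : ∀ s, F s = Real.log (⨆ i : ℤ, ‖a i‖ * Real.exp s ^ i)) :
    ConvexOn ℝ (Set.Ioo (Real.log R₁) (Real.log R₂)) F ∧
      ∀ s ∈ Set.Ioo (Real.log R₁) (Real.log R₂),
        ({i : ℤ | ‖a i‖ * Real.exp s ^ i = ⨆ j : ℤ, ‖a j‖ * Real.exp s ^ j}).Finite →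
        ∃ mp mm : ℤ, HasDerivWithinAt F (mp : ℝ) (Set.Ici s) s ∧
          HasDerivWithinAt F (mm : ℝ) (Set.Iic s) s := by
  have hIoo : ∀ z ∈ Set.Ioo (Real.log R₁) (Real.log R₂), Real.exp z ∈ Set.Ioo R₁ R₂ := by
    intro z hz
    constructor
    · calc R₁ = Real.exp (Real.log R₁) := (Real.exp_log h1).symm
        _ < Real.exp z := Real.exp_lt_exp.mpr hz.1
    · calc Real.exp z < Real.exp (Real.log R₂) := Real.exp_lt_exp.mpr hz.2
        _ = R₂ := Real.exp_log (h1.trans h12)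
  have hfin : ∀ z ∈ Set.Ioo (Real.log R₁) (Real.log R₂),
      ∀ ε > 0, {i : ℤ | ε ≤ ‖a i‖ * Real.exp z ^ i}.Finite := fun z hz =>
    finite_superlevel a (Real.exp z) (Real.exp_pos z) (hconv _ (hIoo z hz))
  have hpos : ∃ i, 0 < ‖a i‖ := hne.imp fun i hi => norm_pos_iff.mpr hi
  have hatt : ∀ z ∈ Set.Ioo (Real.log R₁) (Real.log R₂),
      ∃ i₀, 0 < ‖a i₀‖ * Real.exp z ^ i₀ ∧
        ∀ i, ‖a i‖ * Real.exp z ^ i ≤ ‖a i₀‖ * Real.exp z ^ i₀ := by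
    intro z hz
    exact sup_attained' _ (hfin z hz)
      (hpos.imp fun i hi => mul_pos hi (zpow_pos (Real.exp_pos z) i))
  constructor
  · refine ⟨convex_Ioo _ _, fun x hx y hy p q hp hq hpq => ?_⟩
    simp only [smul_eq_mul]
    set z : ℝ := p * x + q * y with hz
    have hzmem : z ∈ Set.Ioo (Real.log R₁) (Real.log R₂) := by
      have := (convex_Ioo (Real.log R₁) (Real.log R₂)) hx hy hp hq hpq
      simpa [hz] using this
    obtain ⟨i₀, hi₀pos, hi₀max⟩ := hatt z hzmem
    have hai₀ : 0 < ‖a i₀‖ := by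
      rcases (mul_pos_iff.mp hi₀pos) with ⟨h', _⟩ | ⟨_, h'⟩
      · exact h'
      · exact absurd h' (not_lt.mpr (zpow_pos (Real.exp_pos z) i₀).le)
    set L : ℝ := Real.log ‖a i₀‖ with hL
    have hlogval : ∀ w : ℝ, Real.log (‖a i₀‖ * Real.exp w ^ i₀) = L + i₀ * w := by
      intro w
      rw [Real.log_mul hai₀.ne' (zpow_pos (Real.exp_pos w) i₀).ne', Real.log_zpow,
        Real.log_exp, hL]
    have hFz : F z = L + i₀ * z := by
      rw [hF z, ← hlogval z]
      congr 1
      apply le_antisymm (ciSup_le hi₀max)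
      exact le_ciSup ⟨_, by rintro v ⟨i, rfl⟩; exact hi₀max i⟩ i₀
    have hgle : ∀ w ∈ Set.Ioo (Real.log R₁) (Real.log R₂), L + i₀ * w ≤ F w := by
      intro w hw
      obtain ⟨j₀, hj₀pos, hj₀max⟩ := hatt w hw
      have hle : ‖a i₀‖ * Real.exp w ^ i₀ ≤ ⨆ i : ℤ, ‖a i‖ * Real.exp w ^ i := by
        apply le_ciSup (f := fun i : ℤ => ‖a i‖ * Real.exp w ^ i)
          ⟨_, by rintro v ⟨i, rfl⟩; exact hj₀max i⟩
      rw [hF w, ← hlogval w]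
      exact Real.log_le_log (by positivity) hle
    have hgx := hgle x hx
    have hgy := hgle y hy
    have hcomb : F z = p * (L + i₀ * x) + q * (L + i₀ * y) := by
      rw [hFz, hz]
      linear_combination (Real.log ‖a i₀‖) * hpq.symm
    rw [hcomb]
    have := mul_le_mul_of_nonneg_left hgx hp
    have := mul_le_mul_of_nonneg_left hgy hq
    linarith
  · intro s hs _hD
    -- RIGHT derivative
    have hΔp : 0 < (Real.log R₂ - s)/2 := by
      have := hs.2; linarith
    have hsp : s + (Real.log R₂ - s)/2 ∈ Set.Ioo (Real.log R₁) (Real.log R₂) := by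
      constructor
      · have := hs.1; linarith
      · have := hs.2; linarith
    obtain ⟨i₁, _, hi₁max⟩ := hatt _ hsp
    obtain ⟨m, δ, hδ0, heq⟩ := key_right (fun i => ‖a i‖) (fun i => norm_nonneg _)
      s ((Real.log R₂ - s)/2) hΔp (hfin s hs) hpos _ hi₁max
    -- LEFT side via reflection
    have hΔm : 0 < (s - Real.log R₁)/2 := by
      have := hs.1; linarith
    set c' : ℤ → ℝ := fun j => ‖a (-j)‖ * Real.exp (2*s) ^ (-j) with hc'
    have hptwise : ∀ (t : ℝ) (j : ℤ),
        c' j * Real.exp t ^ j = ‖a (-j)‖ * Real.exp (2*s - t) ^ (-j) := by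
      intro t j
      have h4 : Real.exp (2*s) ^ (-j) * Real.exp t ^ j = Real.exp (2*s - t) ^ (-j) := by
        rw [exp_zpow', exp_zpow', exp_zpow', ← Real.exp_add]
        congr 1
        push_cast
        ring
      rw [hc']
      simp only
      rw [mul_assoc, h4]
    have hsup' : ∀ t : ℝ, (⨆ j : ℤ, c' j * Real.exp t ^ j)
        = ⨆ i : ℤ, ‖a i‖ * Real.exp (2*s - t) ^ i := by
      intro t
      have h1 : (fun j : ℤ => c' j * Real.exp t ^ j)
          = fun j : ℤ => (fun i : ℤ => ‖a i‖ * Real.exp (2*s - t) ^ i) (-j) := by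
        funext j; exact hptwise t j
      calc (⨆ j : ℤ, c' j * Real.exp t ^ j)
          = ⨆ j : ℤ, (fun i : ℤ => ‖a i‖ * Real.exp (2*s - t) ^ i) (-j) := by rw [h1]
        _ = _ := iSup_neg_reindex (fun i : ℤ => ‖a i‖ * Real.exp (2*s - t) ^ i)
    have hfin' : ∀ ε > 0, {j : ℤ | ε ≤ c' j * Real.exp s ^ j}.Finite := by
      intro ε hε
      have h2 : {j : ℤ | ε ≤ c' j * Real.exp s ^ j}
          = (fun j : ℤ => -j) ⁻¹' {i : ℤ | ε ≤ ‖a i‖ * Real.exp s ^ i} := by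
        ext j
        simp only [Set.mem_setOf_eq, Set.mem_preimage, hptwise s j]
        have h3 : 2*s - s = s := by ring
        rw [h3]
      rw [h2]
      exact (hfin s hs ε hε).preimage (neg_injective.injOn)
    have hpos' : ∃ j, 0 < c' j := by
      obtain ⟨i, hi⟩ := hpos
      refine ⟨-i, ?_⟩
      rw [hc']
      simp only [neg_neg]
      positivity
    have hsm : 2*s - (s + (s - Real.log R₁)/2) ∈ Set.Ioo (Real.log R₁) (Real.log R₂) := by
      constructor
      · have := hs.1; linarith
      · have := hs.1; have := hs.2; linarith
    obtain ⟨i₂, _, hi₂max⟩ := hatt _ hsm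
    have hB' : ∀ j : ℤ, c' j * Real.exp (s + (s - Real.log R₁)/2) ^ j
        ≤ ‖a i₂‖ * Real.exp (2*s - (s + (s - Real.log R₁)/2)) ^ i₂ := by
      intro j
      rw [hptwise]
      exact hi₂max (-j)
    obtain ⟨m', δ', hδ'0, heq'⟩ := key_right c'
      (fun j => by rw [hc']; positivity) s ((s - Real.log R₁)/2) hΔm hfin' hpos' _ hB'
    refine ⟨m, -m', ?_, ?_⟩
    · -- right derivative
      have haff : HasDerivWithinAt (fun t => F s + (m:ℝ) * (t - s)) (m:ℝ) (Set.Ici s) s := by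
        simpa using (((hasDerivWithinAt_id s (Set.Ici s)).sub_const s).const_mul
          (m:ℝ)).const_add (F s)
      apply haff.congr_of_eventuallyEq ?_ (by simp)
      have hmem : Set.Icc s (s + δ) ∈ nhdsWithin s (Set.Ici s) := by
        apply Filter.mem_of_superset (Filter.inter_mem self_mem_nhdsWithin
          (mem_nhdsWithin_of_mem_nhds (Iio_mem_nhds (by linarith : s < s + δ))))
        rintro t ⟨ht1, ht2⟩
        exact ⟨ht1, le_of_lt ht2⟩
      filter_upwards [hmem] with t ht
      rw [hF t, hF s, heq t ht]
    · -- left derivative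
      have haff : HasDerivWithinAt (fun t => F s + (-m':ℝ) * (t - s)) ((-m':ℤ):ℝ)
          (Set.Iic s) s := by
        push_cast
        simpa using (((hasDerivWithinAt_id s (Set.Iic s)).sub_const s).const_mul
          (-m':ℝ)).const_add (F s)
      apply haff.congr_of_eventuallyEq ?_ (by simp)
      have hmem : Set.Icc (s - δ') s ∈ nhdsWithin s (Set.Iic s) := by
        apply Filter.mem_of_superset (Filter.inter_mem self_mem_nhdsWithin
          (mem_nhdsWithin_of_mem_nhds (Ioi_mem_nhds (by linarith : s - δ' < s))))
        rintro t ⟨ht1, ht2⟩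
        exact ⟨le_of_lt ht2, ht1⟩
      filter_upwards [hmem] with u hu
      have htmem : 2*s - u ∈ Set.Icc s (s + δ') := by
        constructor
        · have := hu.2; linarith
        · have := hu.1; linarith
      have h5 := heq' (2*s - u) htmem
      rw [hsup', hsup'] at h5
      have h6 : 2*s - (2*s - u) = u := by ring
      have h7 : 2*s - s = s := by ring
      rw [h6, h7] at h5
      rw [hF u, hF s, h5]
      push_cast
      ring
end
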